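/- Azzalini's lemma: for any λ, τ ∈ ℝ and Z_N ∼ N(0,1), E[Φ(λ Z_N + τ)] = Φ(τ / √(1 + λ²)), where Φ is the standard normal cdf. -/

import Mathlib

/-! With `W`, `Z` independent standard normal variables, `Φ(λ z + τ) = P(W - λ z ≤ τ)`, so the left
side is `P(W - λ Z ≤ τ)`, i.e. the value at `Iic τ` of the convolution `N(0, 1) ∗ N(0, λ²)`. That
convolution is `N(0, 1 + λ²)`, whose cdf at `τ` is `Φ(τ / √(1 + λ²))`. -/

open MeasureTheory Real Set

noncomputable def phi (x : ℝ) : ℝ := (Real.sqrt (2 * Real.pi))⁻¹ * Real.exp (-x ^ 2 / 2)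

noncomputable def Phi (x : ℝ) : ℝ := ∫ t in Set.Iic x, phi t

open ProbabilityTheory NNReal

namespace MeasureTheory.Measure

lemma antitone_measure_Iic_sub (ν : Measure ℝ) (τ : ℝ) : Antitone fun x => ν (Iic (τ - x)) :=
  fun _ _ hxy => measure_mono (Iic_subset_Iic.2 (by linarith))

lemma measurable_measureReal_Iic_sub (ν : Measure ℝ) [IsFiniteMeasure ν] (τ : ℝ) :
    Measurable fun x => ν.real (Iic (τ - x)) :=
  (antitone_measure_Iic_sub ν τ).measurable.ennreal_toReal

lemma conv_apply_Iic (μ ν : Measure ℝ) [SFinite ν] (τ : ℝ) :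
    (μ ∗ ν) (Iic τ) = ∫⁻ x, ν (Iic (τ - x)) ∂μ := by
  rw [conv, map_apply measurable_add measurableSet_Iic,
    prod_apply (measurable_add measurableSet_Iic)]
  congr with x
  congr with y
  simp [le_sub_iff_add_le']

lemma conv_real_Iic (μ ν : Measure ℝ) [IsFiniteMeasure ν] (τ : ℝ) :
    (μ ∗ ν).real (Iic τ) = ∫ x, ν.real (Iic (τ - x)) ∂μ := by
  rw [measureReal_def, conv_apply_Iic, ← integral_toReal
    (antitone_measure_Iic_sub ν τ).measurable.aemeasurable
    (ae_of_all _ fun _ => measure_lt_top _ _)]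
  rfl

end MeasureTheory.Measure

lemma phi_eq_gaussianPDFReal : phi = gaussianPDFReal 0 1 := by
  ext x
  simp [phi, gaussianPDFReal]

lemma Phi_eq_gaussianReal_real_Iic (x : ℝ) : Phi x = (gaussianReal 0 1).real (Iic x) := by
  rw [measureReal_def, gaussianReal_apply_eq_integral _ one_ne_zero, Phi, phi_eq_gaussianPDFReal,
    ENNReal.toReal_ofReal
      (setIntegral_nonneg measurableSet_Iic fun _ _ => gaussianPDFReal_nonneg _ _ _)]

lemma gaussianReal_real_Iic {v : ℝ≥0} (hv : v ≠ 0) (τ : ℝ) :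
    (gaussianReal 0 v).real (Iic τ) = (gaussianReal 0 1).real (Iic (τ / √(v : ℝ))) := by
  have hσ : 0 < √(v : ℝ) := Real.sqrt_pos.2 (by positivity)
  have hmap : (gaussianReal 0 1).map (√(v : ℝ) * ·) = gaussianReal 0 v := by
    rw [gaussianReal_map_const_mul]
    congr 1
    · simp
    · ext; simp
  rw [← hmap, map_measureReal_apply (by fun_prop) measurableSet_Iic, preimage_const_mul_Iic₀ _ hσ]

/-- Azzalini's lemma: for any λ, τ ∈ ℝ and Z_N ∼ N(0,1),
    E[Φ(λ Z_N + τ)] = Φ(τ / √(1 + λ²)). -/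
theorem azzalini_lemma (lam τ : ℝ) :
    ∫ z : ℝ, Phi (lam * z + τ) * phi z = Phi (τ / Real.sqrt (1 + lam ^ 2)) := by
  have hvar : (0 : ℝ) ≤ 1 + lam ^ 2 := by positivity
  calc ∫ z : ℝ, Phi (lam * z + τ) * phi z
      = ∫ z, (gaussianReal 0 1).real (Iic (τ - -lam * z)) ∂(gaussianReal 0 1) := by
        rw [integral_gaussianReal_eq_integral_smul one_ne_zero, ← phi_eq_gaussianPDFReal]
        congr with z
        rw [smul_eq_mul, mul_comm, Phi_eq_gaussianReal_real_Iic, neg_mul, sub_neg_eq_add, add_comm]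
    _ = ((gaussianReal 0 1).map (-lam * ·) ∗ gaussianReal 0 1).real (Iic τ) := by
        rw [Measure.conv_real_Iic, integral_map (by fun_prop)
          (Measure.measurable_measureReal_Iic_sub _ τ).aestronglyMeasurable]
    _ = (gaussianReal 0 (1 + lam ^ 2).toNNReal).real (Iic τ) := by
        rw [gaussianReal_map_const_mul, gaussianReal_conv_gaussianReal]
        congr 2
        · simp
        · ext
          simp only [NNReal.coe_add, NNReal.coe_mk, NNReal.coe_one, mul_one,
            Real.coe_toNNReal _ hvar]
          ring
    _ = Phi (τ / Real.sqrt (1 + lam ^ 2)) := by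
        rw [gaussianReal_real_Iic (by positivity), Phi_eq_gaussianReal_real_Iic,
          Real.coe_toNNReal _ hvar]
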